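/- Let ℐ be a set of nonzero integral ideals of 𝒪 with the property that if 𝔫 ∈ ℐ and 𝔫 ⊆ 𝔪 for a nonzero integral ideal 𝔪, then 𝔪 ∈ ℐ. Let A, B : ℐ → ℂ be two arithmetic functions. Then the following are equivalent: (i) for every 𝔫 ∈ ℐ one has B(𝔫) = Σ_{𝔟 ∣ 𝔫₁} ω(𝔫, 𝔟²)·A(𝔫𝔟⁻²), the sum being over integral ideals 𝔟 dividing 𝔫₁; (ii) for every 𝔫 ∈ ℐ one has A(𝔫) = Σ_{I ⊆ S(𝔫₁)} (−1)^{#I} · (∏_{v ∈ I ∩ S₁(𝔫₁)} ω_v(𝔫₀)) · B(𝔫·∏_{v ∈ I} 𝔭_v⁻²). -/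

import Mathlib

/- Statement 0: Möbius-type inversion (Proposition `INV-F`) relating
   `B(𝔫) = Σ_{𝔟 ∣ 𝔫₁} ω(𝔫,𝔟²)·A(𝔫𝔟⁻²)` and
   `A(𝔫) = Σ_{I ⊆ S(𝔫₁)} (−1)^{#I} (∏_{v∈I∩S₁(𝔫₁)} ω_v(𝔫₀)) B(𝔫·∏_{v∈I}𝔭_v⁻²)`. -/

open NumberField UniqueFactorizationMonoid
open scoped Classical

namespace Stmt0

variable (F : Type*) [Field F] [NumberField F]

/-- `S(𝔪)`: the set of prime ideals dividing `𝔪`. -/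
noncomputable def S (𝔪 : Ideal (𝓞 F)) : Finset (Ideal (𝓞 F)) :=
  (normalizedFactors 𝔪).toFinset

/-- `ord_v(𝔪)`: the exponent of the prime `v` in `𝔪`. -/
noncomputable def ordv (v 𝔪 : Ideal (𝓞 F)) : ℕ :=
  (normalizedFactors 𝔪).count v

/-- `S_k(𝔪) = {v ∈ S(𝔪) : ord_v(𝔪) = k}`. -/
noncomputable def Sk (k : ℕ) (𝔪 : Ideal (𝓞 F)) : Finset (Ideal (𝓞 F)) :=
  (S F 𝔪).filter fun v => ordv F v 𝔪 = k

/-- `q_v`: the cardinality of the residue field `𝒪/𝔭_v`, as a real number. -/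
noncomputable def qv (v : Ideal (𝓞 F)) : ℝ := (Ideal.absNorm v : ℝ)

/-- `ω_v(𝔠) = 1` if `v ∈ S(𝔠)`, and `(q_v+1)/(q_v−1)` otherwise. -/
noncomputable def omegav (v 𝔠 : Ideal (𝓞 F)) : ℝ :=
  if v ∈ S F 𝔠 then 1 else (qv F v + 1) / (qv F v - 1)

/-- The quotient ideal `𝔫𝔟⁻¹` when `𝔟 ∣ 𝔫` (junk value `0` otherwise). -/
noncomputable def idealDiv (𝔫 𝔟 : Ideal (𝓞 F)) : Ideal (𝓞 F) :=
  if h : ∃ 𝔠, 𝔫 = 𝔟 * 𝔠 then h.choose else 0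

/-- `𝔫₁`: the unique ideal with `𝔫 = 𝔫₀𝔫₁²`, `𝔫₀` squarefree; explicitly
    `𝔫₁ = ∏_v 𝔭_v^{⌊ord_v(𝔫)/2⌋}`. -/
noncomputable def nOne (𝔫 : Ideal (𝓞 F)) : Ideal (𝓞 F) :=
  ∏ v ∈ S F 𝔫, v ^ (ordv F v 𝔫 / 2)

/-- `𝔫₀`: the largest squarefree ideal dividing `𝔫` such that `𝔫 = 𝔫₀𝔫₁²`; explicitly
    the product of the primes occurring in `𝔫` with odd exponent. -/
noncomputable def nZero (𝔫 : Ideal (𝓞 F)) : Ideal (𝓞 F) :=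
  ∏ v ∈ S F 𝔫, v ^ (ordv F v 𝔫 % 2)

/-- `ω(𝔪,𝔟) = δ(𝔪 ⊆ 𝔟) ∏_{v∈S(𝔟)} ω_v(𝔪𝔟⁻¹)`. -/
noncomputable def omega (𝔪 𝔟 : Ideal (𝓞 F)) : ℝ :=
  if 𝔪 ≤ 𝔟 then ∏ v ∈ S F 𝔟, omegav F v (idealDiv F 𝔪 𝔟) else 0


/-!
Substituting (i) into the right-hand side of (ii) and putting `𝔠 = 𝔟 ∏_{v ∈ I} 𝔭_v`, the coefficient
of `A(𝔫𝔠⁻²)` becomes a sum over `I ⊆ S(𝔠)` of products of local factors, i.e.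
`∏_{v ∈ S(𝔠)} (x_v + y_v)` with `x_v` the factor of `v ∈ I` and `y_v = ω_v(𝔫𝔠⁻²)`. A case check on
`ord_v(𝔫₁)` and `ord_v(𝔠)` gives `x_v + y_v = 0`, so only `𝔠 = 1` survives and (ii) inverts (i);
this is (i) ⇒ (ii). Conversely, the transform in (ii) is unitriangular (its `I = ∅` term is `B(𝔫)`,
the others evaluate `B` where `𝔫₁` has fewer prime factors), hence injective on `ℐ`.
-/

section Divisors

variable {α : Type*} [CommMonoidWithZero α] [NormalizationMonoid α]
  [UniqueFactorizationMonoid α] [Subsingleton αˣ]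

noncomputable def divisorsOf (d : α) : Finset α :=
  (normalizedFactors d).powerset.toFinset.image Multiset.prod

theorem mem_divisorsOf {d b : α} (hd : d ≠ 0) : b ∈ divisorsOf d ↔ b ∣ d := by
  constructor
  · intro hb
    obtain ⟨s, hs, rfl⟩ := Finset.mem_image.mp hb
    rw [Multiset.mem_toFinset, Multiset.mem_powerset] at hs
    exact associated_iff_eq.mp (prod_normalizedFactors hd) ▸ Multiset.prod_dvd_prod_of_le hs
  · intro hb
    have hb0 : b ≠ 0 := ne_zero_of_dvd_ne_zero hd hb
    refine Finset.mem_image.mpr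
      ⟨normalizedFactors b, ?_, associated_iff_eq.mp (prod_normalizedFactors hb0)⟩
    rw [Multiset.mem_toFinset, Multiset.mem_powerset]
    exact (dvd_iff_normalizedFactors_le_normalizedFactors hb0 hd).mp hb

theorem finsum_dvd_eq_sum_divisorsOf {M : Type*} [AddCommMonoid M] {d : α} (hd : d ≠ 0)
    (f : α → M) : ∑ᶠ (b : α) (_ : b ∣ d), f b = ∑ b ∈ divisorsOf d, f b := by
  rw [← finsum_mem_coe_finset]
  exact finsum_congr fun b => finsum_congr_Prop (propext (mem_divisorsOf hd)).symm fun _ => rfl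

theorem sum_divisorsOf_mul_right {M : Type*} [AddCommMonoid M] {p k d : α} (hp : p ≠ 0)
    (hk : k ≠ 0) (hd : p * k = d) (f : α → M) :
    ∑ b ∈ divisorsOf k, f (b * p) = ∑ c ∈ divisorsOf d with p ∣ c, f c := by
  subst hd
  have himage : {c ∈ divisorsOf (p * k) | p ∣ c} = (divisorsOf k).image (· * p) := by
    ext c
    simp only [Finset.mem_filter, Finset.mem_image, mem_divisorsOf (mul_ne_zero hp hk),
      mem_divisorsOf hk]
    constructor
    · rintro ⟨hc, b, rfl⟩
      exact ⟨b, (mul_dvd_mul_iff_left hp).mp hc, mul_comm b p⟩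
    · rintro ⟨b, hb, rfl⟩
      exact ⟨mul_comm p b ▸ mul_dvd_mul_left p hb, dvd_mul_left p b⟩
  rw [himage, Finset.sum_image fun a _ b _ h => mul_right_cancel₀ hp h]

end Divisors

section Valuations

variable {F}

theorem prime_of_mem_S {v 𝔪 : Ideal (𝓞 F)} (h : v ∈ S F 𝔪) : Prime v :=
  prime_of_normalized_factor v (Multiset.mem_toFinset.mp h)

theorem mem_S_iff_ordv_pos {v 𝔪 : Ideal (𝓞 F)} : v ∈ S F 𝔪 ↔ 0 < ordv F v 𝔪 := by
  rw [S, ordv, Multiset.mem_toFinset, Multiset.count_pos]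

theorem ordv_eq_zero_of_notMem_S {v 𝔪 : Ideal (𝓞 F)} (h : v ∉ S F 𝔪) : ordv F v 𝔪 = 0 :=
  Nat.eq_zero_of_not_pos (mt mem_S_iff_ordv_pos.mpr h)

theorem ordv_one (v : Ideal (𝓞 F)) : ordv F v 1 = 0 := by
  rw [ordv, normalizedFactors_one, Multiset.count_zero]

theorem ordv_mul {v a b : Ideal (𝓞 F)} (ha : a ≠ 0) (hb : b ≠ 0) :
    ordv F v (a * b) = ordv F v a + ordv F v b := by
  rw [ordv, ordv, ordv, normalizedFactors_mul ha hb, Multiset.count_add]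

theorem ordv_pow (v a : Ideal (𝓞 F)) (k : ℕ) : ordv F v (a ^ k) = k * ordv F v a := by
  rw [ordv, ordv, normalizedFactors_pow, Multiset.count_nsmul]

theorem ordv_prime {v w : Ideal (𝓞 F)} (hw : Prime w) : ordv F v w = if v = w then 1 else 0 := by
  rw [ordv, normalizedFactors_irreducible hw.irreducible, normalize_eq, Multiset.count_singleton]

theorem ordv_prod {ι : Type*} (v : Ideal (𝓞 F)) (s : Finset ι) {f : ι → Ideal (𝓞 F)}
    (hf : ∀ i ∈ s, f i ≠ 0) : ordv F v (∏ i ∈ s, f i) = ∑ i ∈ s, ordv F v (f i) := by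
  induction s using Finset.induction_on with
  | empty => rw [Finset.prod_empty, Finset.sum_empty, ordv_one]
  | insert a s ha ih =>
    rw [Finset.forall_mem_insert] at hf
    rw [Finset.prod_insert ha, Finset.sum_insert ha,
      ordv_mul hf.1 (Finset.prod_ne_zero_iff.mpr hf.2), ih hf.2]

theorem ordv_prod_pow (v : Ideal (𝓞 F)) {s : Finset (Ideal (𝓞 F))} (hs : ∀ w ∈ s, Prime w)
    (e : Ideal (𝓞 F) → ℕ) : ordv F v (∏ w ∈ s, w ^ e w) = if v ∈ s then e v else 0 := by
  rw [ordv_prod v s fun w hw => pow_ne_zero _ (hs w hw).ne_zero, ← Finset.sum_ite_eq]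
  refine Finset.sum_congr rfl fun w hw => ?_
  rw [ordv_pow, ordv_prime (hs w hw), mul_ite, mul_one, mul_zero]

theorem ordv_prod_of_prime (v : Ideal (𝓞 F)) {s : Finset (Ideal (𝓞 F))}
    (hs : ∀ w ∈ s, Prime w) : ordv F v (∏ w ∈ s, w) = if v ∈ s then 1 else 0 := by
  simpa using ordv_prod_pow v hs fun _ => 1

theorem card_normalizedFactors_prod_of_prime {s : Finset (Ideal (𝓞 F))}
    (hs : ∀ w ∈ s, Prime w) : (normalizedFactors (∏ w ∈ s, w)).card = s.card := by
  have hprod : ∏ w ∈ s, w = s.val.prod := (Finset.prod_val s).symm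
  rw [hprod, normalizedFactors_prod_of_prime hs, Finset.card_val]

theorem eq_of_forall_ordv_eq {a b : Ideal (𝓞 F)} (ha : a ≠ 0) (hb : b ≠ 0)
    (h : ∀ v, Prime v → ordv F v a = ordv F v b) : a = b := by
  have hab : normalizedFactors a = normalizedFactors b := by
    ext v
    by_cases hv : v ∈ normalizedFactors a ∨ v ∈ normalizedFactors b
    · exact h v (hv.elim (prime_of_normalized_factor v) (prime_of_normalized_factor v))
    · push Not at hv
      rw [Multiset.count_eq_zero_of_notMem hv.1, Multiset.count_eq_zero_of_notMem hv.2]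
  rw [← associated_iff_eq.mp (prod_normalizedFactors ha),
    ← associated_iff_eq.mp (prod_normalizedFactors hb), hab]

theorem dvd_iff_forall_ordv_le {a b : Ideal (𝓞 F)} (ha : a ≠ 0) (hb : b ≠ 0) :
    a ∣ b ↔ ∀ v, Prime v → ordv F v a ≤ ordv F v b := by
  rw [dvd_iff_normalizedFactors_le_normalizedFactors ha hb, Multiset.le_iff_count]
  refine ⟨fun h v _ => h v, fun h v => ?_⟩
  by_cases hv : v ∈ normalizedFactors a
  · exact h v (prime_of_normalized_factor v hv)
  · rw [Multiset.count_eq_zero_of_notMem hv]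
    exact Nat.zero_le _

theorem ordv_le_of_dvd {a b : Ideal (𝓞 F)} (v : Ideal (𝓞 F)) (hb : b ≠ 0) (h : a ∣ b) :
    ordv F v a ≤ ordv F v b := by
  obtain ⟨c, rfl⟩ := h
  rw [ordv_mul (left_ne_zero_of_mul hb) (right_ne_zero_of_mul hb)]
  exact Nat.le_add_right _ _

theorem S_subset_of_dvd {a b : Ideal (𝓞 F)} (hb : b ≠ 0) (h : a ∣ b) : S F a ⊆ S F b :=
  fun v hv => mem_S_iff_ordv_pos.mpr
    ((mem_S_iff_ordv_pos.mp hv).trans_le (ordv_le_of_dvd v hb h))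

theorem S_pow {a : Ideal (𝓞 F)} {k : ℕ} (hk : k ≠ 0) : S F (a ^ k) = S F a := by
  ext v
  rw [mem_S_iff_ordv_pos, mem_S_iff_ordv_pos, ordv_pow, Nat.mul_pos_iff_of_pos_left hk.bot_lt]

theorem S_eq_empty_iff {a : Ideal (𝓞 F)} (ha : a ≠ 0) : S F a = ∅ ↔ a = 1 := by
  refine ⟨fun h => ?_, fun h => by rw [h, S, normalizedFactors_one, Multiset.toFinset_zero]⟩
  rw [S, Multiset.toFinset_eq_empty] at h
  rw [← associated_iff_eq.mp (prod_normalizedFactors ha), h, Multiset.prod_zero]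

theorem prod_dvd_iff_subset_S {s : Finset (Ideal (𝓞 F))} (hs : ∀ w ∈ s, Prime w)
    {a : Ideal (𝓞 F)} (ha : a ≠ 0) : ∏ w ∈ s, w ∣ a ↔ s ⊆ S F a := by
  rw [dvd_iff_forall_ordv_le (Finset.prod_ne_zero_iff.mpr fun w hw => (hs w hw).ne_zero) ha]
  simp_rw [ordv_prod_of_prime _ hs]
  refine ⟨fun h v hv => mem_S_iff_ordv_pos.mpr ?_, fun h v _ => ?_⟩
  · have hle := h v (hs v hv)
    rwa [if_pos hv] at hle
  · split_ifs with hv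
    · exact mem_S_iff_ordv_pos.mp (h hv)
    · exact Nat.zero_le _

end Valuations

section Quotients

variable {F}

theorem idealDiv_eq {𝔫 𝔟 𝔠 : Ideal (𝓞 F)} (h𝔟 : 𝔟 ≠ 0) (h : 𝔫 = 𝔟 * 𝔠) :
    idealDiv F 𝔫 𝔟 = 𝔠 := by
  have hex : ∃ 𝔠, 𝔫 = 𝔟 * 𝔠 := ⟨𝔠, h⟩
  rw [idealDiv, dif_pos hex]
  exact mul_left_cancel₀ h𝔟 (hex.choose_spec.symm.trans h)

theorem mul_idealDiv {𝔫 𝔟 : Ideal (𝓞 F)} (h𝔟 : 𝔟 ≠ 0) (h : 𝔟 ∣ 𝔫) :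
    𝔟 * idealDiv F 𝔫 𝔟 = 𝔫 := by
  obtain ⟨𝔠, rfl⟩ := h
  rw [idealDiv_eq h𝔟 rfl]

theorem idealDiv_one (𝔫 : Ideal (𝓞 F)) : idealDiv F 𝔫 1 = 𝔫 :=
  idealDiv_eq one_ne_zero (one_mul 𝔫).symm

theorem idealDiv_ne_zero {𝔫 𝔟 : Ideal (𝓞 F)} (h𝔫 : 𝔫 ≠ 0) (h𝔟 : 𝔟 ≠ 0) (h : 𝔟 ∣ 𝔫) :
    idealDiv F 𝔫 𝔟 ≠ 0 :=
  right_ne_zero_of_mul ((mul_idealDiv h𝔟 h).symm ▸ h𝔫)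

theorem le_idealDiv {𝔫 𝔟 : Ideal (𝓞 F)} (h𝔟 : 𝔟 ≠ 0) (h : 𝔟 ∣ 𝔫) : 𝔫 ≤ idealDiv F 𝔫 𝔟 :=
  Ideal.le_of_dvd (Dvd.intro_left _ (mul_idealDiv h𝔟 h))

theorem idealDiv_idealDiv {𝔫 𝔞 𝔟 : Ideal (𝓞 F)} (h𝔞 : 𝔞 ≠ 0) (h𝔟 : 𝔟 ≠ 0) (h : 𝔞 * 𝔟 ∣ 𝔫) :
    idealDiv F (idealDiv F 𝔫 𝔞) 𝔟 = idealDiv F 𝔫 (𝔞 * 𝔟) := by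
  obtain ⟨𝔠, rfl⟩ := h
  rw [idealDiv_eq (mul_ne_zero h𝔞 h𝔟) rfl, idealDiv_eq h𝔞 (mul_assoc 𝔞 𝔟 𝔠), idealDiv_eq h𝔟 rfl]

theorem ordv_idealDiv (v : Ideal (𝓞 F)) {𝔫 𝔟 : Ideal (𝓞 F)} (h𝔫 : 𝔫 ≠ 0) (h𝔟 : 𝔟 ≠ 0)
    (h : 𝔟 ∣ 𝔫) : ordv F v (idealDiv F 𝔫 𝔟) = ordv F v 𝔫 - ordv F v 𝔟 := by
  conv_rhs => rw [← mul_idealDiv h𝔟 h]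
  rw [ordv_mul h𝔟 (idealDiv_ne_zero h𝔫 h𝔟 h), Nat.add_sub_cancel_left]

theorem omega_of_dvd {𝔪 𝔟 : Ideal (𝓞 F)} (h : 𝔟 ∣ 𝔪) :
    omega F 𝔪 𝔟 = ∏ v ∈ S F 𝔟, omegav F v (idealDiv F 𝔪 𝔟) :=
  if_pos (Ideal.le_of_dvd h)

end Quotients

section SquareDecomposition

variable {F} {𝔫 𝔡 : Ideal (𝓞 F)}

theorem nOne_ne_zero : nOne F 𝔫 ≠ 0 :=
  Finset.prod_ne_zero_iff.mpr fun _ hv => pow_ne_zero _ (prime_of_mem_S hv).ne_zero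

theorem ordv_nOne (v : Ideal (𝓞 F)) : ordv F v (nOne F 𝔫) = ordv F v 𝔫 / 2 := by
  rw [nOne, ordv_prod_pow v fun _ hw => prime_of_mem_S hw]
  split_ifs with hv
  · rfl
  · rw [ordv_eq_zero_of_notMem_S hv]

theorem ordv_nZero (v : Ideal (𝓞 F)) : ordv F v (nZero F 𝔫) = ordv F v 𝔫 % 2 := by
  rw [nZero, ordv_prod_pow v fun _ hw => prime_of_mem_S hw]
  split_ifs with hv
  · rfl
  · rw [ordv_eq_zero_of_notMem_S hv]

theorem ne_zero_of_dvd_nOne (h : 𝔡 ∣ nOne F 𝔫) : 𝔡 ≠ 0 :=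
  ne_zero_of_dvd_ne_zero nOne_ne_zero h

theorem ordv_le_of_dvd_nOne (v : Ideal (𝓞 F)) (h : 𝔡 ∣ nOne F 𝔫) :
    ordv F v 𝔡 ≤ ordv F v 𝔫 / 2 :=
  ordv_nOne (𝔫 := 𝔫) v ▸ ordv_le_of_dvd v nOne_ne_zero h

theorem sq_dvd_of_dvd_nOne (h𝔫 : 𝔫 ≠ 0) (h : 𝔡 ∣ nOne F 𝔫) : 𝔡 ^ 2 ∣ 𝔫 := by
  refine (dvd_iff_forall_ordv_le (pow_ne_zero 2 (ne_zero_of_dvd_nOne h)) h𝔫).mpr fun v _ => ?_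
  have := ordv_le_of_dvd_nOne v h
  rw [ordv_pow]
  omega

theorem idealDiv_sq_ne_zero (h𝔫 : 𝔫 ≠ 0) (h : 𝔡 ∣ nOne F 𝔫) : idealDiv F 𝔫 (𝔡 ^ 2) ≠ 0 :=
  idealDiv_ne_zero h𝔫 (pow_ne_zero 2 (ne_zero_of_dvd_nOne h)) (sq_dvd_of_dvd_nOne h𝔫 h)

theorem ordv_idealDiv_sq (v : Ideal (𝓞 F)) (h𝔫 : 𝔫 ≠ 0) (h : 𝔡 ∣ nOne F 𝔫) :
    ordv F v (idealDiv F 𝔫 (𝔡 ^ 2)) = ordv F v 𝔫 - 2 * ordv F v 𝔡 := by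
  rw [ordv_idealDiv v h𝔫 (pow_ne_zero 2 (ne_zero_of_dvd_nOne h)) (sq_dvd_of_dvd_nOne h𝔫 h),
    ordv_pow]

theorem nOne_idealDiv_sq (h𝔫 : 𝔫 ≠ 0) (h : 𝔡 ∣ nOne F 𝔫) :
    nOne F (idealDiv F 𝔫 (𝔡 ^ 2)) = idealDiv F (nOne F 𝔫) 𝔡 := by
  have h𝔡 := ne_zero_of_dvd_nOne h
  refine eq_of_forall_ordv_eq nOne_ne_zero (idealDiv_ne_zero nOne_ne_zero h𝔡 h) fun v _ => ?_
  have := ordv_le_of_dvd_nOne v h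
  rw [ordv_nOne, ordv_idealDiv_sq v h𝔫 h, ordv_idealDiv v nOne_ne_zero h𝔡 h, ordv_nOne]
  omega

theorem card_normalizedFactors_nOne_idealDiv_sq (h𝔫 : 𝔫 ≠ 0) (h : 𝔡 ∣ nOne F 𝔫) :
    (normalizedFactors (nOne F (idealDiv F 𝔫 (𝔡 ^ 2)))).card + (normalizedFactors 𝔡).card =
      (normalizedFactors (nOne F 𝔫)).card := by
  have h𝔡 := ne_zero_of_dvd_nOne h
  conv_rhs => rw [← mul_idealDiv h𝔡 h, ← nOne_idealDiv_sq h𝔫 h]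
  rw [normalizedFactors_mul h𝔡 nOne_ne_zero, Multiset.card_add, add_comm]

end SquareDecomposition

section Transforms

variable {F}

variable (F) in
noncomputable def sqTransform (A : Ideal (𝓞 F) → ℂ) (𝔫 : Ideal (𝓞 F)) : ℂ :=
  ∑ᶠ (𝔟 : Ideal (𝓞 F)) (_ : 𝔟 ∣ nOne F 𝔫), (omega F 𝔫 (𝔟 ^ 2) : ℂ) * A (idealDiv F 𝔫 (𝔟 ^ 2))

variable (F) in
noncomputable def inversionCoeff (𝔫 : Ideal (𝓞 F)) (I : Finset (Ideal (𝓞 F))) : ℂ :=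
  (-1 : ℂ) ^ I.card * ∏ v ∈ I ∩ Sk F 1 (nOne F 𝔫), (omegav F v (nZero F 𝔫) : ℂ)

variable (F) in
noncomputable def inverseTransform (B : Ideal (𝓞 F) → ℂ) (𝔫 : Ideal (𝓞 F)) : ℂ :=
  ∑ I ∈ (S F (nOne F 𝔫)).powerset, inversionCoeff F 𝔫 I * B (idealDiv F 𝔫 (∏ v ∈ I, v ^ 2))

variable (F) in
/-- For `𝔠 = 𝔟 ∏_{w ∈ I} 𝔭_w`, the factor that `v ∈ I` contributes to
`inversionCoeff 𝔫 I * ω(𝔫 ∏_{w ∈ I} 𝔭_w⁻², 𝔟²)`: its share of the coefficient, times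
`ω_v(𝔫𝔠⁻²)` when `v` still divides `𝔟`. A prime `v ∈ S(𝔠) \ I` contributes `ω_v(𝔫𝔠⁻²)`. -/
noncomputable def localFactor (𝔫 𝔠 v : Ideal (𝓞 F)) : ℂ :=
  -((if ordv F v (nOne F 𝔫) = 1 then (omegav F v (nZero F 𝔫) : ℂ) else 1) *
    (if ordv F v 𝔠 = 1 then 1 else (omegav F v (idealDiv F 𝔫 (𝔠 ^ 2)) : ℂ)))

variable {𝔫 𝔠 : Ideal (𝓞 F)} {I : Finset (Ideal (𝓞 F))}

theorem localFactor_add_omegav (h𝔫 : 𝔫 ≠ 0) (h𝔠 : 𝔠 ∣ nOne F 𝔫) {v : Ideal (𝓞 F)}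
    (hv : v ∈ S F 𝔠) : localFactor F 𝔫 𝔠 v + omegav F v (idealDiv F 𝔫 (𝔠 ^ 2)) = 0 := by
  have hpos := mem_S_iff_ordv_pos.mp hv
  have hle := ordv_le_of_dvd_nOne v h𝔠
  have hord := ordv_idealDiv_sq v h𝔫 h𝔠
  rw [localFactor, neg_add_eq_zero, ordv_nOne]
  by_cases hn1 : ordv F v 𝔫 / 2 = 1
  · have hmem : v ∈ S F (nZero F 𝔫) ↔ v ∈ S F (idealDiv F 𝔫 (𝔠 ^ 2)) := by
      rw [mem_S_iff_ordv_pos, mem_S_iff_ordv_pos, hord, ordv_nZero]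
      omega
    rw [if_pos hn1, if_pos (by omega), mul_one, omegav, omegav, if_congr hmem rfl rfl]
  · rw [if_neg hn1, one_mul]
    split_ifs with hc1
    · have hmem : v ∈ S F (idealDiv F 𝔫 (𝔠 ^ 2)) := by
        rw [mem_S_iff_ordv_pos, hord]
        omega
      rw [omegav, if_pos hmem, Complex.ofReal_one]
    · rfl

theorem sum_powerset_localFactor (A : Ideal (𝓞 F) → ℂ) (h𝔫 : 𝔫 ≠ 0) (h𝔠 : 𝔠 ∣ nOne F 𝔫) :
    ∑ I ∈ (S F 𝔠).powerset, (∏ v ∈ I, localFactor F 𝔫 𝔠 v) *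
        (∏ v ∈ S F 𝔠 \ I, (omegav F v (idealDiv F 𝔫 (𝔠 ^ 2)) : ℂ)) * A (idealDiv F 𝔫 (𝔠 ^ 2)) =
      if 𝔠 = 1 then A 𝔫 else 0 := by
  rw [← Finset.sum_mul, ← Finset.prod_add]
  split_ifs with h1
  · rw [h1, (S_eq_empty_iff one_ne_zero).mpr rfl, Finset.prod_empty, one_mul, one_pow,
      idealDiv_one]
  · obtain ⟨v, hv⟩ := Finset.nonempty_iff_ne_empty.mpr
      (mt (S_eq_empty_iff (ne_zero_of_dvd_nOne h𝔠)).mp h1)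
    rw [Finset.prod_eq_zero hv (localFactor_add_omegav h𝔫 h𝔠 hv), zero_mul]

theorem prod_localFactor (hI : I ⊆ S F (nOne F 𝔫)) (𝔠 : Ideal (𝓞 F)) :
    ∏ v ∈ I, localFactor F 𝔫 𝔠 v = inversionCoeff F 𝔫 I *
      ∏ v ∈ I with ordv F v 𝔠 ≠ 1, (omegav F v (idealDiv F 𝔫 (𝔠 ^ 2)) : ℂ) := by
  have hS1 : I ∩ Sk F 1 (nOne F 𝔫) = {v ∈ I | ordv F v (nOne F 𝔫) = 1} := by
    ext v
    simp only [Finset.mem_inter, Finset.mem_filter, Sk]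
    exact ⟨fun ⟨h1, _, h3⟩ => ⟨h1, h3⟩, fun ⟨h1, h2⟩ => ⟨h1, hI h1, h2⟩⟩
  rw [inversionCoeff, hS1, Finset.prod_filter, Finset.prod_filter, ← Finset.prod_const,
    ← Finset.prod_mul_distrib, ← Finset.prod_mul_distrib]
  refine Finset.prod_congr rfl fun v _ => ?_
  rw [localFactor]
  split_ifs <;> first | contradiction | ring

theorem S_eq_sdiff_union_filter {𝔟 : Ideal (𝓞 F)} (h𝔟 : 𝔟 ≠ 0) (hI : ∀ w ∈ I, Prime w) :
    S F 𝔟 = (S F (𝔟 * ∏ w ∈ I, w) \ I) ∪ {v ∈ I | ordv F v (𝔟 * ∏ w ∈ I, w) ≠ 1} := by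
  have hP : ∏ w ∈ I, w ≠ 0 := Finset.prod_ne_zero_iff.mpr fun w hw => (hI w hw).ne_zero
  ext v
  simp only [Finset.mem_union, Finset.mem_sdiff, Finset.mem_filter, mem_S_iff_ordv_pos,
    ordv_mul h𝔟 hP, ordv_prod_of_prime v hI]
  by_cases hv : v ∈ I
  · simp [hv]
    omega
  · simp [hv]

theorem prod_dvd_nOne (hI : I ⊆ S F (nOne F 𝔫)) : ∏ v ∈ I, v ∣ nOne F 𝔫 :=
  (prod_dvd_iff_subset_S (fun _ hv => prime_of_mem_S (hI hv)) nOne_ne_zero).mpr hI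

theorem inversionCoeff_mul_omega (A : Ideal (𝓞 F) → ℂ) (h𝔫 : 𝔫 ≠ 0) (hI : I ⊆ S F (nOne F 𝔫)) {𝔟 : Ideal (𝓞 F)}
    (h𝔟 : 𝔟 ∣ idealDiv F (nOne F 𝔫) (∏ w ∈ I, w)) :
    inversionCoeff F 𝔫 I * (omega F (idealDiv F 𝔫 ((∏ w ∈ I, w) ^ 2)) (𝔟 ^ 2) : ℂ) *
        A (idealDiv F (idealDiv F 𝔫 ((∏ w ∈ I, w) ^ 2)) (𝔟 ^ 2)) =
      (∏ v ∈ I, localFactor F 𝔫 (𝔟 * ∏ w ∈ I, w) v) *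
        (∏ v ∈ S F (𝔟 * ∏ w ∈ I, w) \ I,
          (omegav F v (idealDiv F 𝔫 ((𝔟 * ∏ w ∈ I, w) ^ 2)) : ℂ)) *
        A (idealDiv F 𝔫 ((𝔟 * ∏ w ∈ I, w) ^ 2)) := by
  set P := ∏ w ∈ I, w
  have hprime : ∀ w ∈ I, Prime w := fun _ hw => prime_of_mem_S (hI hw)
  have hP := prod_dvd_nOne hI
  have hP0 := ne_zero_of_dvd_nOne hP
  have h𝔟P : 𝔟 * P ∣ nOne F 𝔫 := by
    rw [mul_comm, ← mul_idealDiv hP0 hP]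
    exact mul_dvd_mul_left P h𝔟
  have h𝔟0 : 𝔟 ≠ 0 := left_ne_zero_of_mul (ne_zero_of_dvd_nOne h𝔟P)
  have hquot : idealDiv F (idealDiv F 𝔫 (P ^ 2)) (𝔟 ^ 2) = idealDiv F 𝔫 ((𝔟 * P) ^ 2) := by
    rw [idealDiv_idealDiv (pow_ne_zero 2 hP0) (pow_ne_zero 2 h𝔟0), ← mul_pow, mul_comm P]
    rw [← mul_pow, mul_comm P]
    exact sq_dvd_of_dvd_nOne h𝔫 h𝔟P
  have h𝔟sq : 𝔟 ^ 2 ∣ idealDiv F 𝔫 (P ^ 2) := by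
    rw [← nOne_idealDiv_sq h𝔫 hP] at h𝔟
    exact sq_dvd_of_dvd_nOne (idealDiv_sq_ne_zero h𝔫 hP) h𝔟
  rw [omega_of_dvd h𝔟sq, S_pow two_ne_zero, hquot, Complex.ofReal_prod,
    S_eq_sdiff_union_filter h𝔟0 hprime, Finset.prod_union, prod_localFactor hI]
  · ring
  · exact Finset.disjoint_left.mpr fun v hv hv' => (Finset.mem_sdiff.mp hv).2 (Finset.mem_filter.mp hv').1

theorem inverseTransform_sqTransform (A : Ideal (𝓞 F) → ℂ) (h𝔫 : 𝔫 ≠ 0) :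
    inverseTransform F (sqTransform F A) 𝔫 = A 𝔫 := by
  set term : Finset (Ideal (𝓞 F)) → Ideal (𝓞 F) → ℂ := fun I 𝔠 =>
    (∏ v ∈ I, localFactor F 𝔫 𝔠 v) *
      (∏ v ∈ S F 𝔠 \ I, (omegav F v (idealDiv F 𝔫 (𝔠 ^ 2)) : ℂ)) * A (idealDiv F 𝔫 (𝔠 ^ 2))
  have hsubst : ∀ I ∈ (S F (nOne F 𝔫)).powerset,
      inversionCoeff F 𝔫 I * sqTransform F A (idealDiv F 𝔫 (∏ v ∈ I, v ^ 2)) =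
        ∑ 𝔠 ∈ divisorsOf (nOne F 𝔫) with ∏ v ∈ I, v ∣ 𝔠, term I 𝔠 := by
    intro I hI
    rw [Finset.mem_powerset] at hI
    have hP := prod_dvd_nOne hI
    have hP0 := ne_zero_of_dvd_nOne hP
    have hquot0 := idealDiv_ne_zero nOne_ne_zero hP0 hP
    rw [sqTransform, Finset.prod_pow, nOne_idealDiv_sq h𝔫 hP,
      finsum_dvd_eq_sum_divisorsOf hquot0, Finset.mul_sum,
      ← sum_divisorsOf_mul_right hP0 hquot0 (mul_idealDiv hP0 hP) (term I)]
    refine Finset.sum_congr rfl fun 𝔟 h𝔟 => ?_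
    rw [← mul_assoc,
      inversionCoeff_mul_omega A h𝔫 hI ((mem_divisorsOf hquot0).mp h𝔟)]
  have hswap : ∀ I 𝔠, I ∈ (S F (nOne F 𝔫)).powerset ∧
      𝔠 ∈ {𝔠 ∈ divisorsOf (nOne F 𝔫) | ∏ v ∈ I, v ∣ 𝔠} ↔
        I ∈ (S F 𝔠).powerset ∧ 𝔠 ∈ divisorsOf (nOne F 𝔫) := by
    intro I 𝔠
    simp only [Finset.mem_powerset, Finset.mem_filter, mem_divisorsOf nOne_ne_zero]
    constructor
    · rintro ⟨hI, h𝔠, hP⟩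
      exact ⟨(prod_dvd_iff_subset_S (fun _ hv => prime_of_mem_S (hI hv))
        (ne_zero_of_dvd_nOne h𝔠)).mp hP, h𝔠⟩
    · rintro ⟨hI, h𝔠⟩
      exact ⟨hI.trans (S_subset_of_dvd nOne_ne_zero h𝔠), h𝔠,
        (prod_dvd_iff_subset_S (fun _ hv => prime_of_mem_S (hI hv))
          (ne_zero_of_dvd_nOne h𝔠)).mpr hI⟩
  calc inverseTransform F (sqTransform F A) 𝔫
      = ∑ I ∈ (S F (nOne F 𝔫)).powerset,
          ∑ 𝔠 ∈ divisorsOf (nOne F 𝔫) with ∏ v ∈ I, v ∣ 𝔠, term I 𝔠 :=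
        Finset.sum_congr rfl hsubst
    _ = ∑ 𝔠 ∈ divisorsOf (nOne F 𝔫), ∑ I ∈ (S F 𝔠).powerset, term I 𝔠 :=
        Finset.sum_comm' hswap
    _ = ∑ 𝔠 ∈ divisorsOf (nOne F 𝔫), if 𝔠 = 1 then A 𝔫 else 0 :=
        Finset.sum_congr rfl fun 𝔠 h𝔠 =>
          sum_powerset_localFactor A h𝔫 ((mem_divisorsOf nOne_ne_zero).mp h𝔠)
    _ = A 𝔫 := by
        rw [Finset.sum_ite_eq', if_pos ((mem_divisorsOf nOne_ne_zero).mpr (one_dvd _))]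

theorem inverseTransform_eq_add (B : Ideal (𝓞 F) → ℂ) :
    inverseTransform F B 𝔫 = B 𝔫 + ∑ I ∈ (S F (nOne F 𝔫)).powerset.erase ∅,
      inversionCoeff F 𝔫 I * B (idealDiv F 𝔫 (∏ v ∈ I, v ^ 2)) := by
  rw [inverseTransform, ← Finset.add_sum_erase _ _ (Finset.empty_mem_powerset _), inversionCoeff,
    Finset.card_empty, pow_zero, Finset.empty_inter, Finset.prod_empty, Finset.prod_empty,
    one_mul, one_mul, idealDiv_one]

theorem idealDiv_sq_mem {ℐ : Set (Ideal (𝓞 F))}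
    (hℐup : ∀ 𝔫 ∈ ℐ, ∀ 𝔪 : Ideal (𝓞 F), 𝔪 ≠ 0 → 𝔫 ≤ 𝔪 → 𝔪 ∈ ℐ) (h𝔫ℐ : 𝔫 ∈ ℐ) (h𝔫 : 𝔫 ≠ 0)
    {𝔡 : Ideal (𝓞 F)} (h : 𝔡 ∣ nOne F 𝔫) : idealDiv F 𝔫 (𝔡 ^ 2) ∈ ℐ :=
  hℐup 𝔫 h𝔫ℐ _ (idealDiv_sq_ne_zero h𝔫 h)
    (le_idealDiv (pow_ne_zero 2 (ne_zero_of_dvd_nOne h)) (sq_dvd_of_dvd_nOne h𝔫 h))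

theorem eq_of_inverseTransform_eq {ℐ : Set (Ideal (𝓞 F))} (hℐ0 : ∀ 𝔫 ∈ ℐ, 𝔫 ≠ 0)
    (hℐup : ∀ 𝔫 ∈ ℐ, ∀ 𝔪 : Ideal (𝓞 F), 𝔪 ≠ 0 → 𝔫 ≤ 𝔪 → 𝔪 ∈ ℐ) {B B' : Ideal (𝓞 F) → ℂ}
    (h : ∀ 𝔫 ∈ ℐ, inverseTransform F B 𝔫 = inverseTransform F B' 𝔫) :
    ∀ 𝔫 ∈ ℐ, B 𝔫 = B' 𝔫 := by
  suffices ∀ k, ∀ 𝔫 ∈ ℐ, (normalizedFactors (nOne F 𝔫)).card = k → B 𝔫 = B' 𝔫 from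
    fun 𝔫 h𝔫 => this _ 𝔫 h𝔫 rfl
  intro k
  induction k using Nat.strong_induction_on with
  | _ k ih =>
    rintro 𝔫 h𝔫 rfl
    have hrest : ∑ I ∈ (S F (nOne F 𝔫)).powerset.erase ∅,
          inversionCoeff F 𝔫 I * B (idealDiv F 𝔫 (∏ v ∈ I, v ^ 2)) =
        ∑ I ∈ (S F (nOne F 𝔫)).powerset.erase ∅,
          inversionCoeff F 𝔫 I * B' (idealDiv F 𝔫 (∏ v ∈ I, v ^ 2)) := by
      refine Finset.sum_congr rfl fun I hI => ?_
      obtain ⟨hne, hI⟩ := Finset.mem_erase.mp hI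
      rw [Finset.mem_powerset] at hI
      have hP := prod_dvd_nOne hI
      have hcard := card_normalizedFactors_nOne_idealDiv_sq (hℐ0 𝔫 h𝔫) hP
      rw [card_normalizedFactors_prod_of_prime fun _ hv => prime_of_mem_S (hI hv)] at hcard
      have hpos : 0 < I.card := Finset.card_pos.mpr (Finset.nonempty_iff_ne_empty.mpr hne)
      rw [Finset.prod_pow, ih _ (by omega) _ (idealDiv_sq_mem hℐup h𝔫 (hℐ0 𝔫 h𝔫) hP) rfl]
    have h𝔫eq := h 𝔫 h𝔫
    rwa [inverseTransform_eq_add, inverseTransform_eq_add, hrest, add_left_inj] at h𝔫eq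

end Transforms

theorem statement0
    (ℐ : Set (Ideal (𝓞 F)))
    (hℐ0 : ∀ 𝔫 ∈ ℐ, 𝔫 ≠ 0)
    (hℐup : ∀ 𝔫 ∈ ℐ, ∀ 𝔪 : Ideal (𝓞 F), 𝔪 ≠ 0 → 𝔫 ≤ 𝔪 → 𝔪 ∈ ℐ)
    (A B : Ideal (𝓞 F) → ℂ) :
    (∀ 𝔫 ∈ ℐ,
        B 𝔫 = ∑ᶠ (𝔟 : Ideal (𝓞 F)) (_ : 𝔟 ∣ nOne F 𝔫),
          (omega F 𝔫 (𝔟 ^ 2) : ℂ) * A (idealDiv F 𝔫 (𝔟 ^ 2)))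
    ↔
    (∀ 𝔫 ∈ ℐ,
        A 𝔫 = ∑ I ∈ (S F (nOne F 𝔫)).powerset,
          (-1 : ℂ) ^ I.card *
            (∏ v ∈ I ∩ Sk F 1 (nOne F 𝔫), (omegav F v (nZero F 𝔫) : ℂ)) *
            B (idealDiv F 𝔫 (∏ v ∈ I, v ^ 2))) := by
  change (∀ 𝔫 ∈ ℐ, B 𝔫 = sqTransform F A 𝔫) ↔ (∀ 𝔫 ∈ ℐ, A 𝔫 = inverseTransform F B 𝔫)
  constructor
  · intro hB 𝔫 h𝔫
    rw [← inverseTransform_sqTransform A (hℐ0 𝔫 h𝔫)]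
    refine Finset.sum_congr rfl fun I hI => ?_
    rw [Finset.prod_pow,
      hB _ (idealDiv_sq_mem hℐup h𝔫 (hℐ0 𝔫 h𝔫) (prod_dvd_nOne (Finset.mem_powerset.mp hI)))]
  · intro hA
    refine eq_of_inverseTransform_eq hℐ0 hℐup fun 𝔫 h𝔫 => ?_
    rw [← hA 𝔫 h𝔫, inverseTransform_sqTransform A (hℐ0 𝔫 h𝔫)]

end Stmt0
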